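/- Let f : I → ℝ be continuous, strictly increasing and convex on an open interval I. If the two-variable quasiarithmetic mean A_f is Jensen convex, then there exist functions a, b : I² → ℝ such that f((x+y)/2) − f((u+v)/2) ≤ a(u,v)(f(x)−f(u)) + b(u,v)(f(y)−f(v)) for all x, y, u, v ∈ I; in particular, one may take a(u,v) and b(u,v) to be suitable quotients of one-sided derivatives of f. Conversely, if such a, b exist then A_f is Jensen convex. -/
import Mathlib
open Set Function

/-- A continuous midpoint-superadditive function on `[0,1]` vanishing at the endpoints
is nonnegative. -/
lemma phi_nonneg_aux {φ : ℝ → ℝ} (hc : ContinuousOn φ (Icc 0 1))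
    (h0 : φ 0 = 0) (h1 : φ 1 = 0)
    (hmid : ∀ s ∈ Icc (0:ℝ) 1, ∀ t ∈ Icc (0:ℝ) 1, φ s + φ t ≤ 2 * φ ((s + t) / 2)) :
    ∀ θ ∈ Icc (0:ℝ) 1, 0 ≤ φ θ := by
  by_contra h
  push_neg at h
  obtain ⟨θ₀, hθ₀, hneg⟩ := h
  obtain ⟨θm, hθm, hmin⟩ := isCompact_Icc.exists_isMinOn (nonempty_Icc.2 zero_le_one) hc
  set m := φ θm with hm
  have hmin' : ∀ θ ∈ Icc (0:ℝ) 1, m ≤ φ θ := fun θ hθ => hmin hθ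
  have hmneg : m < 0 := lt_of_le_of_lt (hmin' θ₀ hθ₀) hneg
  set S : Set ℝ := Icc 0 1 ∩ φ ⁻¹' {m} with hS
  have hSclosed : IsClosed S := hc.preimage_isClosed_of_isClosed isClosed_Icc isClosed_singleton
  have hSne : S.Nonempty := ⟨θm, hθm, rfl⟩
  have hSbdd : BddBelow S := ⟨0, fun θ hθ => hθ.1.1⟩
  have hcS : sInf S ∈ S := hSclosed.csInf_mem hSne hSbdd
  set c := sInf S with hcdef
  have hc01 : c ∈ Icc (0:ℝ) 1 := hcS.1
  have hφc : φ c = m := hcS.2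
  have hc0 : c ≠ 0 := by intro h; rw [h] at hφc; rw [h0] at hφc; linarith
  have hc1 : c ≠ 1 := by intro h; rw [h] at hφc; rw [h1] at hφc; linarith
  have hc0' : 0 < c := lt_of_le_of_ne hc01.1 (Ne.symm hc0)
  have hc1' : c < 1 := lt_of_le_of_ne hc01.2 hc1
  set δ := min c (1 - c) with hδ
  have hδpos : 0 < δ := lt_min hc0' (by linarith)
  have hδc : δ ≤ c := min_le_left _ _
  have hδc' : δ ≤ 1 - c := min_le_right _ _
  have hl : c - δ ∈ Icc (0:ℝ) 1 := ⟨by linarith, by linarith⟩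
  have hr : c + δ ∈ Icc (0:ℝ) 1 := ⟨by linarith, by linarith⟩
  have hmid' := hmid _ hl _ hr
  have heq : (c - δ + (c + δ)) / 2 = c := by ring
  rw [heq, hφc] at hmid'
  have hφr : m ≤ φ (c + δ) := hmin' _ hr
  have hφl : m ≤ φ (c - δ) := hmin' _ hl
  have hφlne : φ (c - δ) ≠ m := by
    intro h
    have : c - δ ∈ S := ⟨hl, h⟩
    have := csInf_le hSbdd this
    linarith
  have : m < φ (c - δ) := lt_of_le_of_ne hφl (Ne.symm hφlne)
  linarith


lemma concaveOn_of_midpoint_aux {K : Set (ℝ × ℝ)} (hK : Convex ℝ K) {G : ℝ × ℝ → ℝ}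
    (hGc : ContinuousOn G K)
    (hmid : ∀ z ∈ K, ∀ w ∈ K, G z + G w ≤ 2 * G ((1 / 2 : ℝ) • (z + w))) :
    ConcaveOn ℝ K G := by
  refine ⟨hK, fun z hz w hw a b ha hb hab => ?_⟩
  set φ : ℝ → ℝ := fun θ => G (θ • z + (1 - θ) • w) - θ * G z - (1 - θ) * G w with hφdef
  have hpath : ∀ θ ∈ Icc (0:ℝ) 1, θ • z + (1 - θ) • w ∈ K := fun θ hθ =>
    hK hz hw hθ.1 (by linarith [hθ.2]) (by ring)
  have hpathc : Continuous (fun θ : ℝ => θ • z + (1 - θ) • w) := by continuity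
  have hφc : ContinuousOn φ (Icc 0 1) := by
    apply ContinuousOn.sub
    apply ContinuousOn.sub
    · exact hGc.comp hpathc.continuousOn hpath
    · exact (continuous_id.mul continuous_const).continuousOn
    · exact ((continuous_const.sub continuous_id).mul continuous_const).continuousOn
  have hφ0 : φ 0 = 0 := by simp [hφdef]
  have hφ1 : φ 1 = 0 := by simp [hφdef]
  have hφmid : ∀ s ∈ Icc (0:ℝ) 1, ∀ t ∈ Icc (0:ℝ) 1, φ s + φ t ≤ 2 * φ ((s + t) / 2) := by
    intro s hs t ht
    have h := hmid _ (hpath s hs) _ (hpath t ht)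
    have heq : (1 / 2 : ℝ) • ((s • z + (1 - s) • w) + (t • z + (1 - t) • w)) =
        ((s + t) / 2) • z + (1 - (s + t) / 2) • w := by module
    rw [heq] at h
    simp only [hφdef]
    linarith
  have hnn := phi_nonneg_aux hφc hφ0 hφ1 hφmid a ⟨ha, by linarith⟩
  have hb' : b = 1 - a := by linarith
  subst hb'
  simp only [hφdef, smul_eq_mul] at hnn ⊢
  linarith


lemma exists_supergrad_aux {K : Set (ℝ × ℝ)} (hKop : IsOpen K) {G : ℝ × ℝ → ℝ}
    (hG : ConcaveOn ℝ K G) (hGc : ContinuousOn G K) {z₀ : ℝ × ℝ} (hz₀ : z₀ ∈ K) :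
    ∃ a b : ℝ, ∀ z ∈ K, G z - G z₀ ≤ a * (z.1 - z₀.1) + b * (z.2 - z₀.2) := by
  set S : Set ((ℝ × ℝ) × ℝ) := {p | p.1 ∈ K ∧ p.2 < G p.1} with hSdef
  have hH : ContinuousOn (fun p : (ℝ × ℝ) × ℝ => G p.1 - p.2) (K ×ˢ (univ : Set ℝ)) :=
    (hGc.comp continuous_fst.continuousOn (fun p hp => hp.1)).sub continuous_snd.continuousOn
  have hSopen : IsOpen S := by
    have heq : S = (K ×ˢ (univ : Set ℝ)) ∩ (fun p : (ℝ × ℝ) × ℝ => G p.1 - p.2) ⁻¹' (Ioi 0) := by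
      ext p; simp [hSdef, sub_pos]
    rw [heq]
    exact hH.isOpen_inter_preimage (hKop.prod isOpen_univ) isOpen_Ioi
  have hSconv : Convex ℝ S := hG.convex_strict_hypograph
  have hz₀S : ((z₀, G z₀) : (ℝ × ℝ) × ℝ) ∉ S := fun h => lt_irrefl _ h.2
  obtain ⟨L, hL⟩ := geometric_hahn_banach_open_point hSconv hSopen hz₀S
  set γ := L (((0, 0) : ℝ × ℝ), (1 : ℝ)) with hγdef
  have hdecomp : ∀ (v : ℝ × ℝ) (r : ℝ), L (v, r) = L (v, 0) + r * γ := by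
    intro v r
    have h : ((v, r) : (ℝ × ℝ) × ℝ) = (v, 0) + r • (((0, 0) : ℝ × ℝ), (1 : ℝ)) := by
      simp [Prod.ext_iff]
    rw [h, map_add, map_smul, smul_eq_mul]
  have hL' : ∀ z ∈ K, ∀ r : ℝ, r < G z → L (z, 0) + r * γ < L (z₀, 0) + G z₀ * γ := by
    intro z hz r hr
    have h := hL (z, r) ⟨hz, hr⟩
    rw [hdecomp z r, hdecomp z₀ (G z₀)] at h
    exact h
  have hγ : 0 < γ := by
    have h1 := hL' z₀ hz₀ (G z₀ - 1) (by linarith)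
    nlinarith
  have key : ∀ z ∈ K, L (z, 0) + G z * γ ≤ L (z₀, 0) + G z₀ * γ := by
    intro z hz
    have h2 : ∀ ε > (0:ℝ), L (z, 0) + (G z - ε) * γ < L (z₀, 0) + G z₀ * γ := by
      intro ε hε
      have h := hL' z hz (G z - ε) (by linarith)
      exact h
    by_contra hcon
    push_neg at hcon
    set d := (L (z, 0) + G z * γ) - (L (z₀, 0) + G z₀ * γ) with hd
    have hdpos : 0 < d := by simp only [hd]; linarith
    have hεγ : (d / (2 * γ)) * γ = d / 2 := by field_simp
    have := h2 (d / (2 * γ)) (by positivity)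
    nlinarith
  set α := L (((1, 0) : ℝ × ℝ), (0 : ℝ)) with hα
  set β := L (((0, 1) : ℝ × ℝ), (0 : ℝ)) with hβ
  have hvdecomp : ∀ v : ℝ × ℝ, L (v, 0) = v.1 * α + v.2 * β := by
    intro v
    have h : ((v, 0) : (ℝ × ℝ) × ℝ) =
        v.1 • (((1, 0) : ℝ × ℝ), (0 : ℝ)) + v.2 • (((0, 1) : ℝ × ℝ), (0 : ℝ)) := by
      simp [Prod.ext_iff]
    rw [h, map_add, map_smul, map_smul, smul_eq_mul, smul_eq_mul]
  refine ⟨-α / γ, -β / γ, fun z hz => ?_⟩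
  have h3 := key z hz
  rw [hvdecomp, hvdecomp] at h3
  have h4 : (G z - G z₀) * γ ≤ (-α) * (z.1 - z₀.1) + (-β) * (z.2 - z₀.2) := by nlinarith
  have h5 : G z - G z₀ ≤ ((-α) * (z.1 - z₀.1) + (-β) * (z.2 - z₀.2)) / γ :=
    (le_div_iff₀ hγ).2 h4
  calc G z - G z₀ ≤ ((-α) * (z.1 - z₀.1) + (-β) * (z.2 - z₀.2)) / γ := h5
    _ = -α / γ * (z.1 - z₀.1) + -β / γ * (z.2 - z₀.2) := by ring

theorem stmt_9 (I : Set ℝ) (hIop : IsOpen I) (hIcv : Convex ℝ I) (hIne : I.Nonempty)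
    (f : ℝ → ℝ) (hfc : ContinuousOn f I)
    (hfm : StrictMonoOn f I) (hfcv : ConvexOn ℝ I f)
    (A : ℝ → ℝ → ℝ)
    (hA : ∀ x ∈ I, ∀ y ∈ I, A x y ∈ I ∧ f (A x y) = (f x + f y) / 2) :
    (∀ x ∈ I, ∀ y ∈ I, ∀ u ∈ I, ∀ v ∈ I,
        A ((x + y) / 2) ((u + v) / 2) ≤ (A x u + A y v) / 2) ↔
    (∃ a b : ℝ → ℝ → ℝ, ∀ x ∈ I, ∀ y ∈ I, ∀ u ∈ I, ∀ v ∈ I,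
        f ((x + y) / 2) - f ((u + v) / 2) ≤
          a u v * (f x - f u) + b u v * (f y - f v)) := by
  have hmidI : ∀ x ∈ I, ∀ y ∈ I, (x + y) / 2 ∈ I := by
    intro x hx y hy
    have h := hIcv hx hy (by norm_num : (0:ℝ) ≤ 1/2) (by norm_num : (0:ℝ) ≤ 1/2)
      (by norm_num : (1/2:ℝ) + 1/2 = 1)
    simp only [smul_eq_mul] at h
    rw [show (x + y) / 2 = 1/2 * x + 1/2 * y from by ring]
    exact h
  constructor
  · -- forward direction
    intro hjensen
    have hIord : I.OrdConnected := hIcv.ordConnected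
    have hfmono : MonotoneOn f I := hfm.monotoneOn
    set J := f '' I with hJdef
    have hmemJ : ∀ x ∈ I, f x ∈ J := fun x hx => ⟨x, hx, rfl⟩
    have hJcv : Convex ℝ J := by
      have hoc : J.OrdConnected := by
        constructor
        rintro s ⟨x, hx, rfl⟩ t ⟨y, hy, rfl⟩ c hc
        rcases le_total x y with hxy | hxy
        · have hIcc : Icc x y ⊆ I := hIord.out hx hy
          obtain ⟨w, hw, rfl⟩ := intermediate_value_Icc hxy (hfc.mono hIcc) hc
          exact ⟨w, hIcc hw, rfl⟩
        · have hfyx : f y ≤ f x := hfmono hy hx hxy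
          exact ⟨x, hx, le_antisymm hc.1 (hc.2.trans hfyx)⟩
      exact hoc.convex
    have hmidJ : ∀ s ∈ J, ∀ t ∈ J, (s + t) / 2 ∈ J := by
      intro s hs t ht
      have h := hJcv hs ht (by norm_num : (0:ℝ) ≤ 1/2) (by norm_num : (0:ℝ) ≤ 1/2)
        (by norm_num : (1/2:ℝ) + 1/2 = 1)
      simp only [smul_eq_mul] at h
      rw [show (s + t) / 2 = 1/2 * s + 1/2 * t from by ring]
      exact h
    have hJop : IsOpen J := by
      rw [isOpen_iff_mem_nhds]
      rintro s ⟨u, hu, rfl⟩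
      obtain ⟨ε, hε, hball⟩ := Metric.isOpen_iff.1 hIop u hu
      have ha : u - ε/2 ∈ I := hball (by simp [Real.dist_eq]; rw [abs_of_pos hε]; linarith)
      have hb : u + ε/2 ∈ I := hball (by simp [Real.dist_eq]; rw [abs_of_pos hε]; linarith)
      have hab : u - ε/2 ≤ u + ε/2 := by linarith
      have hIcc : Icc (u - ε/2) (u + ε/2) ⊆ I := hIord.out ha hb
      have hsub := intermediate_value_Ioo hab (hfc.mono hIcc)
      refine mem_nhds_iff.2 ⟨Ioo (f (u - ε/2)) (f (u + ε/2)), ?_, isOpen_Ioo, ?_⟩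
      · intro c hcmem
        obtain ⟨w, hw, rfl⟩ := hsub hcmem
        exact ⟨w, hIcc (Ioo_subset_Icc_self hw), rfl⟩
      · exact ⟨hfm ha hu (by linarith), hfm hu hb (by linarith)⟩
    set g := Function.invFunOn f I with hgdef
    have hgJ : ∀ s ∈ J, g s ∈ I ∧ f (g s) = s := by
      rintro s ⟨x, hx, rfl⟩
      exact ⟨Function.invFunOn_mem ⟨x, hx, rfl⟩, Function.invFunOn_eq ⟨x, hx, rfl⟩⟩
    have hinj : Set.InjOn f I := hfm.injOn
    have hgfx : ∀ x ∈ I, g (f x) = x := fun x hx =>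
      hinj (hgJ _ (hmemJ x hx)).1 hx ((hgJ _ (hmemJ x hx)).2)
    have hgmono : StrictMonoOn g J := by
      intro s hs t ht hst
      by_contra hle
      push_neg at hle
      have h := hfmono (hgJ t ht).1 (hgJ s hs).1 hle
      rw [(hgJ t ht).2, (hgJ s hs).2] at h
      linarith
    have hIsubgJ : I ⊆ g '' J := fun x hx => ⟨f x, hmemJ x hx, hgfx x hx⟩
    have hgcont : ContinuousOn g J := by
      intro s hs
      exact (hgmono.continuousAt_of_image_mem_nhds (hJop.mem_nhds hs)
        (Filter.mem_of_superset (hIop.mem_nhds (hgJ s hs).1) hIsubgJ)).continuousWithinAt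
    set K := J ×ˢ J with hKdef
    set G : ℝ × ℝ → ℝ := fun p => f ((g p.1 + g p.2) / 2) with hGdef
    have hKop : IsOpen K := hJop.prod hJop
    have hKcv : Convex ℝ K := hJcv.prod hJcv
    have hGcont : ContinuousOn G K := by
      have h1 : ContinuousOn (fun p : ℝ × ℝ => (g p.1 + g p.2) / 2) K :=
        ((hgcont.comp continuous_fst.continuousOn (fun p hp => hp.1)).add
          (hgcont.comp continuous_snd.continuousOn (fun p hp => hp.2))).div_const 2
      exact hfc.comp h1 (fun p hp => hmidI _ (hgJ _ hp.1).1 _ (hgJ _ hp.2).1)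
    have hGmid : ∀ z ∈ K, ∀ w ∈ K, G z + G w ≤ 2 * G ((1/2 : ℝ) • (z + w)) := by
      intro z hz w hw
      obtain ⟨x, hx, hx'⟩ := hz.1
      obtain ⟨y, hy, hy'⟩ := hz.2
      obtain ⟨u, hu, hu'⟩ := hw.1
      obtain ⟨v, hv, hv'⟩ := hw.2
      obtain ⟨hAxuI, hAxu⟩ := hA x hx u hu
      obtain ⟨hAyvI, hAyv⟩ := hA y hy v hv
      have hxy2 : (x + y) / 2 ∈ I := hmidI x hx y hy
      have huv2 : (u + v) / 2 ∈ I := hmidI u hu v hv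
      obtain ⟨hAmI, hAm⟩ := hA _ hxy2 _ huv2
      have hj := hjensen x hx y hy u hu v hv
      have hMI : (A x u + A y v) / 2 ∈ I := hmidI _ hAxuI _ hAyvI
      have hfj := hfmono hAmI hMI hj
      have hgz1 : g z.1 = x := by rw [← hx']; exact hgfx x hx
      have hgz2 : g z.2 = y := by rw [← hy']; exact hgfx y hy
      have hgw1 : g w.1 = u := by rw [← hu']; exact hgfx u hu
      have hgw2 : g w.2 = v := by rw [← hv']; exact hgfx v hv
      have hs1J : (z.1 + w.1) / 2 ∈ J := hmidJ _ hz.1 _ hw.1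
      have hs2J : (z.2 + w.2) / 2 ∈ J := hmidJ _ hz.2 _ hw.2
      have hAxu_eq : A x u = g ((z.1 + w.1) / 2) := by
        refine hinj hAxuI (hgJ _ hs1J).1 ?_
        rw [hAxu, (hgJ _ hs1J).2, hx', hu']
      have hAyv_eq : A y v = g ((z.2 + w.2) / 2) := by
        refine hinj hAyvI (hgJ _ hs2J).1 ?_
        rw [hAyv, (hgJ _ hs2J).2, hy', hv']
      have hmidpt : (1/2 : ℝ) • (z + w) = (((z.1 + w.1) / 2, (z.2 + w.2) / 2) : ℝ × ℝ) := by
        refine Prod.ext ?_ ?_ <;> simp [smul_eq_mul] <;> ring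
      rw [hmidpt]
      have hGz : G z = f ((x + y) / 2) := by simp only [hGdef, hgz1, hgz2]
      have hGw : G w = f ((u + v) / 2) := by simp only [hGdef, hgw1, hgw2]
      have hGm : G (((z.1 + w.1) / 2, (z.2 + w.2) / 2) : ℝ × ℝ) = f ((A x u + A y v) / 2) := by
        simp only [hGdef, ← hAxu_eq, ← hAyv_eq]
      rw [hGz, hGw, hGm]
      rw [hAm] at hfj
      linarith
    have hGconc := concaveOn_of_midpoint_aux hKcv hGcont hGmid
    have hkey : ∀ u v : ℝ, ∃ ab : ℝ × ℝ, u ∈ I → v ∈ I → ∀ x ∈ I, ∀ y ∈ I,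
        f ((x + y) / 2) - f ((u + v) / 2) ≤ ab.1 * (f x - f u) + ab.2 * (f y - f v) := by
      intro u v
      by_cases hu : u ∈ I
      · by_cases hv : v ∈ I
        · obtain ⟨a, b, hab⟩ := exists_supergrad_aux hKop hGconc hGcont
            (show ((f u, f v) : ℝ × ℝ) ∈ K from ⟨hmemJ u hu, hmemJ v hv⟩)
          refine ⟨(a, b), fun _ _ x hx y hy => ?_⟩
          have h := hab (f x, f y) ⟨hmemJ x hx, hmemJ y hy⟩
          have h1 : G (f x, f y) = f ((x + y) / 2) := by
            simp only [hGdef]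
            rw [show g (f x, f y).1 = x from hgfx x hx, show g (f x, f y).2 = y from hgfx y hy]
          have h2 : G (f u, f v) = f ((u + v) / 2) := by
            simp only [hGdef]
            rw [show g (f u, f v).1 = u from hgfx u hu, show g (f u, f v).2 = v from hgfx v hv]
          rw [h1, h2] at h
          exact h
        · exact ⟨(0, 0), fun _ h => absurd h hv⟩
      · exact ⟨(0, 0), fun h => absurd h hu⟩
    choose ab hab using hkey
    exact ⟨fun u v => (ab u v).1, fun u v => (ab u v).2,
      fun x hx y hy u hu v hv => hab u v hu hv x hx y hy⟩
  · -- backward direction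
    rintro ⟨a, b, h⟩ x hx y hy u hu v hv
    obtain ⟨hm1I, hm1⟩ := hA x hx u hu
    obtain ⟨hm2I, hm2⟩ := hA y hy v hv
    have hMI : (A x u + A y v) / 2 ∈ I := hmidI _ hm1I _ hm2I
    have hxy2 : (x + y) / 2 ∈ I := hmidI x hx y hy
    have huv2 : (u + v) / 2 ∈ I := hmidI u hu v hv
    obtain ⟨hLI, hL⟩ := hA _ hxy2 _ huv2
    have h1 := h x hx y hy (A x u) hm1I (A y v) hm2I
    have h2 := h u hu v hv (A x u) hm1I (A y v) hm2I
    rw [hm1, hm2] at h1 h2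
    have hfle : f (A ((x + y) / 2) ((u + v) / 2)) ≤ f ((A x u + A y v) / 2) := by
      rw [hL]
      nlinarith [h1, h2]
    exact (hfm.le_iff_le hLI hMI).1 hfle
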